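/- arXiv:0711.2712 — 4 statements merged into one kernel-verified Lean document; each statement's English description precedes it below -/
import Mathlib

section
/- Let X0, X1, X2, Y2, Y3 be random variables such that X1 – (X2, Y2) – Y3 and X0 – (X1, X2, Y3) – Y2 are Markov chains. Then I((X0, X1) ; (Y2, Y3) | X2) = I(X1 ; Y2 | X2) + I(X0 ; Y3 | (X1, X2)). -/
open MeasureTheory ProbabilityTheory

/-- Shannon entropy of a random variable `X` with values in a finite space,
with respect to the measure `μ`. -/
noncomputable def entropy {Ω S : Type*} [MeasurableSpace Ω] [MeasurableSpace S] [Fintype S]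
    (μ : Measure Ω) (X : Ω → S) : ℝ :=
  ∑ x : S, Real.negMulLog ((μ.map X) {x}).toReal

/-- Shannon conditional entropy `H(X | Y)` (as in `ProbabilityTheory.condEntropy`). -/
noncomputable def condEntropy {Ω S T : Type*} [MeasurableSpace Ω] [MeasurableSpace S]
    [MeasurableSpace T] [Fintype S] [Fintype T] (μ : Measure Ω) (X : Ω → S) (Y : Ω → T) : ℝ :=
  entropy μ (fun ω => (X ω, Y ω)) - entropy μ Y

/-- Conditional mutual information `I(X ; Y | Z)` (as in
`ProbabilityTheory.condMutualInfo`). -/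
noncomputable def condMutualInfo {Ω S T U : Type*} [MeasurableSpace Ω] [MeasurableSpace S]
    [MeasurableSpace T] [MeasurableSpace U] [Fintype S] [Fintype T] [Fintype U]
    (μ : Measure Ω) (X : Ω → S) (Y : Ω → T) (Z : Ω → U) : ℝ :=
  condEntropy μ X Z + condEntropy μ Y Z - condEntropy μ (fun ω => (X ω, Y ω)) Z

/-!
By the chain rule for conditional mutual information,
`I((X0, X1) ; (Y2, Y3) | X2) = I(X1 ; Y2 | X2) + I(X1 ; Y3 | X2, Y2) + I(X0 ; Y3 | X1, X2)
  + I(X0 ; Y2 | X1, X2, Y3)`, and the two Markov chains make the second and fourth terms vanish.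
A conditional independence of `f` and `g` given a discrete `W` factorizes their joint law on every
atom `{W = w}`, where the conditional expectations are constant. Writing each entropy as
`-∑ p log (marginal of p)` over the joint law `p` of `(f, g, W)`, this factorization makes
`I(f ; g | W)` vanish term by term.
-/

open Real Finset

section Entropy

variable {Ω S T : Type*} [MeasurableSpace Ω] [MeasurableSpace S] [MeasurableSpace T]
  [Fintype S] [Fintype T] [DiscreteMeasurableSpace S] [DiscreteMeasurableSpace T]

lemma sum_negMulLog_map_measureReal_singleton (ν : Measure S) [IsFiniteMeasure ν] (φ : S → T) :
    ∑ t, negMulLog ((ν.map φ).real {t}) = -∑ s, ν.real {s} * log ((ν.map φ).real {φ s}) := by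
  classical
  rw [← sum_fiberwise univ φ, ← sum_neg_distrib]
  refine sum_congr rfl fun t _ => ?_
  have hfiber : (ν.map φ).real {t} = ∑ s with φ s = t, ν.real {s} := by
    rw [map_measureReal_apply .of_discrete (measurableSet_singleton t), sum_measureReal_singleton]
    congr
    ext
    simp
  calc negMulLog ((ν.map φ).real {t})
      = -((∑ s with φ s = t, ν.real {s}) * log ((ν.map φ).real {t})) := by
        rw [negMulLog, neg_mul, ← hfiber]
    _ = _ := by
        rw [sum_mul]
        congr 1
        exact sum_congr rfl fun s hs => by rw [(mem_filter.1 hs).2]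

lemma entropy_comp_eq_neg_sum (μ : Measure Ω) [IsFiniteMeasure μ] {V : Ω → S} (hV : Measurable V)
    (φ : S → T) :
    entropy μ (fun ω => φ (V ω))
      = -∑ s, (μ.map V).real {s} * log (((μ.map V).map φ).real {φ s}) := by
  rw [← sum_negMulLog_map_measureReal_singleton, Measure.map_map .of_discrete hV]
  rfl

lemma entropy_eq_neg_sum (μ : Measure Ω) [IsFiniteMeasure μ] {V : Ω → S} (hV : Measurable V) :
    entropy μ V = -∑ s, (μ.map V).real {s} * log ((μ.map V).real {s}) := by
  simpa using entropy_comp_eq_neg_sum μ hV id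

lemma entropy_comp_of_injective (μ : Measure Ω) [IsFiniteMeasure μ] {V : Ω → S}
    (hV : Measurable V) {φ : S → T} (hφ : φ.Injective) :
    entropy μ (fun ω => φ (V ω)) = entropy μ V := by
  rw [entropy_comp_eq_neg_sum μ hV, entropy_eq_neg_sum μ hV]
  congr! with s
  rw [map_measureReal_apply .of_discrete (measurableSet_singleton _), ← Set.image_singleton,
    hφ.preimage_image]

end Entropy

section CondIndep

variable {Ω α β γ : Type*} [MeasurableSpace Ω] [MeasurableSpace α] [MeasurableSpace β]
  [mγ : MeasurableSpace γ] [MeasurableSingletonClass γ] {μ : Measure Ω} {W : Ω → γ}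

lemma setIntegral_preimage_singleton_of_stronglyMeasurable_comap {φ : Ω → ℝ}
    (hφ : StronglyMeasurable[mγ.comap W] φ) (hW : Measurable W) {ω₀ : Ω} :
    ∫ ω in W ⁻¹' {W ω₀}, φ ω ∂μ = φ ω₀ * μ.real (W ⁻¹' {W ω₀}) := by
  rw [setIntegral_congr_fun (hW (measurableSet_singleton _)) fun ω hω => hφ.factorsThrough hω,
    setIntegral_const, smul_eq_mul, mul_comm]

lemma measureReal_inter_preimage_singleton_eq_condExp_mul [IsFiniteMeasure μ] (hW : Measurable W)
    {D : Set Ω} (hD : MeasurableSet D) (ω₀ : Ω) :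
    μ.real (D ∩ W ⁻¹' {W ω₀}) = (μ⟦D | mγ.comap W⟧) ω₀ * μ.real (W ⁻¹' {W ω₀}) := by
  rw [← setIntegral_preimage_singleton_of_stronglyMeasurable_comap stronglyMeasurable_condExp hW,
    setIntegral_condExp hW.comap_le ((integrable_const 1).indicator hD)
      ⟨{W ω₀}, measurableSet_singleton _, rfl⟩, setIntegral_indicator hD]
  simp [Set.inter_comm]

theorem CondIndepFun.measureReal_inter_preimage_singleton_mul [StandardBorelSpace Ω]
    [IsFiniteMeasure μ] {f : Ω → α} {g : Ω → β} (hf : Measurable f) (hg : Measurable g)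
    (hW : Measurable W)
    (h : CondIndepFun (mγ.comap W) hW.comap_le f g μ) {s : Set α} {t : Set β}
    (hs : MeasurableSet s) (ht : MeasurableSet t) (w : γ) :
    μ.real (f ⁻¹' s ∩ g ⁻¹' t ∩ W ⁻¹' {w}) * μ.real (W ⁻¹' {w})
      = μ.real (f ⁻¹' s ∩ W ⁻¹' {w}) * μ.real (g ⁻¹' t ∩ W ⁻¹' {w}) := by
  by_cases hw : μ (W ⁻¹' {w}) = 0
  · simp [measureReal_def, hw, measure_mono_null Set.inter_subset_right hw]
  have hprod := (condIndepFun_iff_condExp_inter_preimage_eq_mul hf hg).1 h s t hs ht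
  obtain ⟨ω₀, rfl, hω₀⟩ := Measure.exists_mem_of_measure_ne_zero_of_ae hw
    (ae_restrict_of_ae (s := W ⁻¹' {w}) hprod)
  rw [measureReal_inter_preimage_singleton_eq_condExp_mul hW ((hf hs).inter (hg ht)),
    measureReal_inter_preimage_singleton_eq_condExp_mul hW (hf hs),
    measureReal_inter_preimage_singleton_eq_condExp_mul hW (hg ht), hω₀]
  ring

end CondIndep

lemma mul_log_add_log_eq_of_mul_eq {p q a b : ℝ} (hp : 0 ≤ p) (hpa : p ≤ a) (hpb : p ≤ b)
    (h : p * q = a * b) : p * (log a + log b) = p * (log p + log q) := by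
  rcases hp.eq_or_lt with rfl | hp
  · simp
  have ha := hp.trans_le hpa
  have hb := hp.trans_le hpb
  have hq : q ≠ 0 := by
    rintro rfl
    simp only [mul_zero] at h
    exact (mul_pos ha hb).ne h
  rw [← log_mul ha.ne' hb.ne', ← log_mul hp.ne' hq, h]

lemma measureReal_singleton_le_map_measureReal_singleton {S T : Type*} [MeasurableSpace S]
    [MeasurableSpace T] [DiscreteMeasurableSpace S] [MeasurableSingletonClass T]
    (ν : Measure S) [IsFiniteMeasure ν] (φ : S → T) (s : S) :
    ν.real {s} ≤ (ν.map φ).real {φ s} := by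
  rw [map_measureReal_apply .of_discrete (measurableSet_singleton _)]
  exact measureReal_mono (Set.singleton_subset_iff.2 rfl)

theorem CondIndepFun.entropy_add_entropy {Ω α β γ : Type*} [MeasurableSpace Ω]
    [StandardBorelSpace Ω] [MeasurableSpace α] [Fintype α] [DiscreteMeasurableSpace α]
    [MeasurableSpace β] [Fintype β] [DiscreteMeasurableSpace β]
    [mγ : MeasurableSpace γ] [Fintype γ] [DiscreteMeasurableSpace γ]
    {μ : Measure Ω} [IsFiniteMeasure μ] {f : Ω → α} {g : Ω → β} {W : Ω → γ}
    (hf : Measurable f) (hg : Measurable g) (hW : Measurable W)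
    (h : CondIndepFun (mγ.comap W) hW.comap_le f g μ) :
    entropy μ (fun ω => (f ω, W ω)) + entropy μ (fun ω => (g ω, W ω))
      = entropy μ (fun ω => ((f ω, g ω), W ω)) + entropy μ W := by
  have hV : Measurable fun ω => ((f ω, g ω), W ω) := (hf.prodMk hg).prodMk hW
  have hfW := entropy_comp_eq_neg_sum μ hV fun p => (p.1.1, p.2)
  have hgW := entropy_comp_eq_neg_sum μ hV fun p => (p.1.2, p.2)
  have hW' := entropy_comp_eq_neg_sum μ hV Prod.snd
  dsimp only at hfW hgW hW'
  rw [hfW, hgW, hW', entropy_eq_neg_sum μ hV]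
  simp only [← neg_add, ← sum_add_distrib, ← mul_add]
  congr 1
  refine sum_congr rfl fun ⟨⟨a, b⟩, w⟩ _ => mul_log_add_log_eq_of_mul_eq measureReal_nonneg
    (measureReal_singleton_le_map_measureReal_singleton _ _ _)
    (measureReal_singleton_le_map_measureReal_singleton _ _ _) ?_
  simp only [Measure.map_map .of_discrete hV]
  rw [map_measureReal_apply hV (measurableSet_singleton _),
    map_measureReal_apply (measurable_snd.comp hV) (measurableSet_singleton _),
    map_measureReal_apply (Measurable.of_discrete.comp hV) (measurableSet_singleton _),
    map_measureReal_apply (Measurable.of_discrete.comp hV) (measurableSet_singleton _)]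
  convert CondIndepFun.measureReal_inter_preimage_singleton_mul hf hg hW h
    (measurableSet_singleton a) (measurableSet_singleton b) w using 3 <;> ext <;> simp [and_assoc]

section CondMutualInfo

variable {Ω A B C D A' B' D' : Type*} [MeasurableSpace Ω] {μ : Measure Ω} [IsFiniteMeasure μ]
  [MeasurableSpace A] [Fintype A] [DiscreteMeasurableSpace A]
  [MeasurableSpace B] [Fintype B] [DiscreteMeasurableSpace B]
  [MeasurableSpace C] [Fintype C] [DiscreteMeasurableSpace C]
  [MeasurableSpace D] [Fintype D] [DiscreteMeasurableSpace D]
  {X : Ω → A} {Y : Ω → B} {Z : Ω → C} {W : Ω → D}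

theorem CondIndepFun.condMutualInfo_eq_zero [StandardBorelSpace Ω] (hX : Measurable X)
    (hY : Measurable Y) (hW : Measurable W)
    (h : CondIndepFun (MeasurableSpace.comap W inferInstance) hW.comap_le X Y μ) :
    condMutualInfo μ X Y W = 0 := by
  have := CondIndepFun.entropy_add_entropy hX hY hW h
  simp only [condMutualInfo, condEntropy]
  linarith

lemma condMutualInfo_comp_of_injective
    [MeasurableSpace A'] [Fintype A'] [DiscreteMeasurableSpace A']
    [MeasurableSpace B'] [Fintype B'] [DiscreteMeasurableSpace B']
    [MeasurableSpace D'] [Fintype D'] [DiscreteMeasurableSpace D']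
    (hX : Measurable X) (hY : Measurable Y) (hW : Measurable W)
    {σ : A → A'} {τ : B → B'} {ρ : D → D'} (hσ : σ.Injective) (hτ : τ.Injective)
    (hρ : ρ.Injective) :
    condMutualInfo μ (fun ω => σ (X ω)) (fun ω => τ (Y ω)) (fun ω => ρ (W ω))
      = condMutualInfo μ X Y W := by
  simp only [condMutualInfo, condEntropy]
  rw [entropy_comp_of_injective μ hW hρ]
  congr 3
  exacts [entropy_comp_of_injective μ (hX.prodMk hW) (hσ.prodMap hρ),
    entropy_comp_of_injective μ (hY.prodMk hW) (hτ.prodMap hρ),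
    entropy_comp_of_injective μ ((hX.prodMk hY).prodMk hW) ((hσ.prodMap hτ).prodMap hρ)]

lemma condMutualInfo_comm (hX : Measurable X) (hY : Measurable Y) (hW : Measurable W) :
    condMutualInfo μ X Y W = condMutualInfo μ Y X W := by
  have hswap : entropy μ (fun ω => ((Y ω, X ω), W ω)) = entropy μ (fun ω => ((X ω, Y ω), W ω)) :=
    entropy_comp_of_injective μ ((hX.prodMk hY).prodMk hW)
      (Prod.swap_injective.prodMap Function.injective_id)
  simp only [condMutualInfo, condEntropy, hswap]
  ring

lemma condMutualInfo_prod_left (hX : Measurable X) (hY : Measurable Y) (hZ : Measurable Z)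
    (hW : Measurable W) :
    condMutualInfo μ (fun ω => (X ω, Y ω)) Z W
      = condMutualInfo μ Y Z W + condMutualInfo μ X Z (fun ω => (Y ω, W ω)) := by
  have hXYW : entropy μ (fun ω => (X ω, (Y ω, W ω))) = entropy μ (fun ω => ((X ω, Y ω), W ω)) :=
    entropy_comp_of_injective μ ((hX.prodMk hY).prodMk hW) (Equiv.prodAssoc A B D).injective
  have hZYW : entropy μ (fun ω => (Z ω, (Y ω, W ω))) = entropy μ (fun ω => ((Y ω, Z ω), W ω)) :=
    entropy_comp_of_injective μ ((hY.prodMk hZ).prodMk hW) (φ := fun p => (p.1.2, p.1.1, p.2))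
      fun _ _ h => by simp_all [Prod.ext_iff]
  have hXZYW : entropy μ (fun ω => ((X ω, Z ω), (Y ω, W ω)))
      = entropy μ (fun ω => (((X ω, Y ω), Z ω), W ω)) :=
    entropy_comp_of_injective μ (((hX.prodMk hY).prodMk hZ).prodMk hW)
      (φ := fun p => ((p.1.1.1, p.1.2), (p.1.1.2, p.2))) fun _ _ h => by simp_all [Prod.ext_iff]
  simp only [condMutualInfo, condEntropy, hXYW, hZYW, hXZYW]
  ring

lemma condMutualInfo_prod_right (hX : Measurable X) (hY : Measurable Y) (hZ : Measurable Z)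
    (hW : Measurable W) :
    condMutualInfo μ X (fun ω => (Y ω, Z ω)) W
      = condMutualInfo μ X Z W + condMutualInfo μ X Y (fun ω => (Z ω, W ω)) := by
  rw [condMutualInfo_comm hX (hY.prodMk hZ) hW, condMutualInfo_prod_left hY hZ hX hW,
    condMutualInfo_comm hZ hX hW, condMutualInfo_comm hY hX (hZ.prodMk hW)]

end CondMutualInfo

theorem cutset_reduction_protocolB_general
    {Ω S0 S1 S2 T2 T3 : Type*}
    [MeasurableSpace Ω] [StandardBorelSpace Ω]
    [MeasurableSpace S0] [Fintype S0] [DiscreteMeasurableSpace S0]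
    [MeasurableSpace S1] [Fintype S1] [DiscreteMeasurableSpace S1]
    [MeasurableSpace S2] [Fintype S2] [DiscreteMeasurableSpace S2]
    [MeasurableSpace T2] [Fintype T2] [DiscreteMeasurableSpace T2]
    [MeasurableSpace T3] [Fintype T3] [DiscreteMeasurableSpace T3]
    (μ : Measure Ω) [IsProbabilityMeasure μ]
    (X0 : Ω → S0) (X1 : Ω → S1) (X2 : Ω → S2)
    (Y2 : Ω → T2) (Y3 : Ω → T3)
    (hX0 : Measurable X0) (hX1 : Measurable X1) (hX2 : Measurable X2)
    (hY2 : Measurable Y2) (hY3 : Measurable Y3)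
    (hMarkov1 : CondIndepFun
      (MeasurableSpace.comap (fun ω => (X2 ω, Y2 ω)) inferInstance)
      ((hX2.prodMk hY2).comap_le)
      X1 Y3 μ)
    (hMarkov2 : CondIndepFun
      (MeasurableSpace.comap (fun ω => (X1 ω, X2 ω, Y3 ω)) inferInstance)
      ((hX1.prodMk (hX2.prodMk hY3)).comap_le)
      X0 Y2 μ) :
    condMutualInfo μ (fun ω => (X0 ω, X1 ω)) (fun ω => (Y2 ω, Y3 ω)) X2
      = condMutualInfo μ X1 Y2 X2
        + condMutualInfo μ X0 Y3 (fun ω => (X1 ω, X2 ω)) := by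
  have hY3Y2 : condMutualInfo μ X1 (fun ω => (Y2 ω, Y3 ω)) X2
      = condMutualInfo μ X1 (fun ω => (Y3 ω, Y2 ω)) X2 :=
    condMutualInfo_comp_of_injective hX1 (hY3.prodMk hY2) hX2 (σ := id) (τ := Prod.swap)
      (ρ := id) Function.injective_id Prod.swap_injective Function.injective_id
  have hMarkov1' : condMutualInfo μ X1 Y3 (fun ω => (Y2 ω, X2 ω)) = 0 := by
    rw [← CondIndepFun.condMutualInfo_eq_zero hX1 hY3 (hX2.prodMk hY2) hMarkov1]
    exact condMutualInfo_comp_of_injective hX1 hY3 (hX2.prodMk hY2) (σ := id) (τ := id)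
      (ρ := Prod.swap) Function.injective_id Function.injective_id Prod.swap_injective
  have hMarkov2' : condMutualInfo μ X0 Y2 (fun ω => (Y3 ω, X1 ω, X2 ω)) = 0 := by
    rw [← CondIndepFun.condMutualInfo_eq_zero hX0 hY2 (hX1.prodMk (hX2.prodMk hY3)) hMarkov2]
    exact condMutualInfo_comp_of_injective hX0 hY2 (hX1.prodMk (hX2.prodMk hY3))
      (σ := id) (τ := id) Function.injective_id Function.injective_id
      (ρ := fun p => (p.2.2, p.1, p.2.1)) fun _ _ h => by simp_all [Prod.ext_iff]
  rw [condMutualInfo_prod_left hX0 hX1 (hY2.prodMk hY3) hX2, hY3Y2,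
    condMutualInfo_prod_right hX1 hY3 hY2 hX2,
    condMutualInfo_prod_right hX0 hY2 hY3 (hX1.prodMk hX2), hMarkov1', hMarkov2']
  ring

/-- If `X1 – (X2, Y2) – Y3` and `X0 – (X1, X2, Y3) – Y2` are Markov chains, then
`I((X0, X1) ; (Y2, Y3) | X2) = I(X1 ; Y2 | X2) + I(X0 ; Y3 | (X1, X2))`. -/
theorem cutset_reduction_protocolB
    {Ω S0 S1 S2 T2 T3 : Type*}
    [MeasurableSpace Ω] [StandardBorelSpace Ω]
    [MeasurableSpace S0] [Fintype S0] [Nonempty S0] [DiscreteMeasurableSpace S0]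
    [MeasurableSpace S1] [Fintype S1] [Nonempty S1] [DiscreteMeasurableSpace S1]
    [MeasurableSpace S2] [Fintype S2] [Nonempty S2] [DiscreteMeasurableSpace S2]
    [MeasurableSpace T2] [Fintype T2] [Nonempty T2] [DiscreteMeasurableSpace T2]
    [MeasurableSpace T3] [Fintype T3] [Nonempty T3] [DiscreteMeasurableSpace T3]
    (μ : Measure Ω) [IsProbabilityMeasure μ]
    (X0 : Ω → S0) (X1 : Ω → S1) (X2 : Ω → S2)
    (Y2 : Ω → T2) (Y3 : Ω → T3)
    (hX0 : Measurable X0) (hX1 : Measurable X1) (hX2 : Measurable X2)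
    (hY2 : Measurable Y2) (hY3 : Measurable Y3)
    (hMarkov1 : CondIndepFun
      (MeasurableSpace.comap (fun ω => (X2 ω, Y2 ω)) inferInstance)
      ((hX2.prodMk hY2).comap_le)
      X1 Y3 μ)
    (hMarkov2 : CondIndepFun
      (MeasurableSpace.comap (fun ω => (X1 ω, X2 ω, Y3 ω)) inferInstance)
      ((hX1.prodMk (hX2.prodMk hY3)).comap_le)
      X0 Y2 μ) :
    condMutualInfo μ (fun ω => (X0 ω, X1 ω)) (fun ω => (Y2 ω, Y3 ω)) X2
      = condMutualInfo μ X1 Y2 X2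
        + condMutualInfo μ X0 Y3 (fun ω => (X1 ω, X2 ω)) :=
  cutset_reduction_protocolB_general μ X0 X1 X2 Y2 Y3 hX0 hX1 hX2 hY2 hY3 hMarkov1 hMarkov2
end

section
/- Let K ≥ 2 be a natural number, let X_0, …, X_K and Y_1, …, Y_{K+1} be random variables, and fix k with 1 ≤ k ≤ K − 1. Write X_i^j for the tuple (X_i, X_{i+1}, …, X_j) and Y_i^j for the tuple (Y_i, …, Y_j). If X_k – (Y_{k+1}, X_{k+1}^K) – Y_{k+2}^{K+1} and X_0^{k−1} – (Y_{K+1}, X_k^K) – Y_{k+1}^K are Markov chains, then I(X_0^k ; Y_{k+1}^{K+1} | X_{k+1}^K) = I(X_k ; Y_{k+1} | X_{k+1}^K) + I(X_0^{k−1} ; Y_{K+1} | X_k^K). -/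
open MeasureTheory ProbabilityTheory

/-- The tuple `(X_a, X_{a+1}, …, X_b)` of a family of random variables, viewed as a single
random variable with values in the (finite) product space `∀ l : Set.Icc a b, S l`. -/
abbrev tuple {Ω : Type*} {S : ℕ → Type*} (X : ∀ i, Ω → S i) (a b : ℕ) :
    Ω → ∀ l : Set.Icc a b, S l := fun ω l => X l ω


/-! By the chain rule, `I(X_0^k ; Y_{k+1}^{K+1} | X_{k+1}^K)` splits into
`I(X_k ; Y_{k+1}^{K+1} | X_{k+1}^K) + I(X_0^{k-1} ; Y_{k+1}^{K+1} | X_k^K)`. A second application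
peels `Y_{k+1}` off the first term and `Y_{K+1}` off the second, and the two remainders
`I(X_k ; Y_{k+2}^{K+1} | Y_{k+1}, X_{k+1}^K)` and `I(X_0^{k-1} ; Y_{k+1}^K | Y_{K+1}, X_k^K)` vanish
by the two Markov chains.

The entropy of a random variable only depends on the partition of `Ω` into its fibres
(its `Setoid.ker`), which is how tuples are split and regrouped. Conditional independence given a
discrete `ζ` factorises the joint law on every atom `{ζ = c}` (the conditional expectations are
constant there), and this factorisation makes the conditional mutual information vanish term by
term. -/

open Real Finset

theorem mul_log_add_mul_log_eq_of_mul_eq {p q r s : ℝ} (hs : p ≠ 0 → s ≠ 0) (h : p * s = q * r) :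
    p * log q + p * log r = p * log p + p * log s := by
  rcases eq_or_ne p 0 with rfl | hp
  · simp
  have hqr : q * r ≠ 0 := h ▸ mul_ne_zero hp (hs hp)
  rw [← mul_add, ← mul_add, ← log_mul (left_ne_zero_of_mul hqr) (right_ne_zero_of_mul hqr),
    ← log_mul hp (hs hp), h]

theorem Setoid.ker_prodMk {α β γ : Type*} (f : α → β) (g : α → γ) :
    Setoid.ker (fun x => (f x, g x)) = Setoid.ker f ⊓ Setoid.ker g :=
  Setoid.ext fun _ _ => by simp only [Setoid.ker_def, Setoid.inf_iff_and, Prod.ext_iff]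

section Entropy

variable {Ω A B C D E F : Type*} [MeasurableSpace Ω] {μ : Measure Ω} [IsFiniteMeasure μ]
  [MeasurableSpace A] [Fintype A] [MeasurableSingletonClass A]
  [MeasurableSpace B] [Fintype B] [MeasurableSingletonClass B]
  [MeasurableSpace C] [Fintype C] [MeasurableSingletonClass C]
  [MeasurableSpace D] [Fintype D] [MeasurableSingletonClass D]
  [MeasurableSpace E] [Fintype E] [MeasurableSingletonClass E]
  [MeasurableSpace F] [Fintype F] [MeasurableSingletonClass F]

theorem entropy_comp_eq_sum {W : Ω → A} (hW : Measurable W) (φ : A → B) :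
    entropy μ (φ ∘ W) = ∑ a, -(μ.real (W ⁻¹' {a}) * log (μ.real ((φ ∘ W) ⁻¹' {φ a}))) := by
  classical
  have hφW : Measurable (φ ∘ W) := (measurable_of_finite φ).comp hW
  have fiber (b : B) : μ.real ((φ ∘ W) ⁻¹' {b}) = ∑ a with φ a = b, μ.real (W ⁻¹' {a}) := by
    rw [sum_measureReal_preimage_singleton _ fun a _ => hW (measurableSet_singleton a)]
    congr 1
    ext ω
    simp
  calc entropy μ (φ ∘ W) = ∑ b, negMulLog (μ.real ((φ ∘ W) ⁻¹' {b})) := by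
        simp only [entropy, Measure.map_apply hφW (measurableSet_singleton _), measureReal_def]
    _ = ∑ b, ∑ a with φ a = b, -(μ.real (W ⁻¹' {a}) * log (μ.real ((φ ∘ W) ⁻¹' {φ a}))) := by
        refine sum_congr rfl fun b _ => ?_
        rw [sum_congr rfl fun a ha => by rw [(mem_filter.1 ha).2], sum_neg_distrib, ← sum_mul,
          ← fiber, negMulLog, neg_mul]
    _ = _ := sum_fiberwise _ φ _

theorem entropy_eq_of_ker_eq {U : Ω → A} {V : Ω → B} (hU : Measurable U) (hV : Measurable V)
    (h : Setoid.ker U = Setoid.ker V) : entropy μ U = entropy μ V := by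
  change entropy μ (Prod.fst ∘ fun ω => (U ω, V ω)) = entropy μ (Prod.snd ∘ fun ω => (U ω, V ω))
  rw [entropy_comp_eq_sum (hU.prodMk hV), entropy_comp_eq_sum (hU.prodMk hV)]
  refine sum_congr rfl fun w _ => ?_
  by_cases hw : ∃ ω₀, (U ω₀, V ω₀) = w
  · obtain ⟨ω₀, rfl⟩ := hw
    have hfiber : U ⁻¹' {U ω₀} = V ⁻¹' {V ω₀} := by
      ext ω
      simpa [Setoid.ker_def] using Setoid.ext_iff.1 h ω ω₀
    simp only [Function.comp_def]
    rw [hfiber]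
  · have hempty : (fun ω => (U ω, V ω)) ⁻¹' {w} = ∅ :=
      Set.eq_empty_of_forall_notMem fun ω hω => hw ⟨ω, hω⟩
    simp [hempty]

theorem condMutualInfo_congr {X : Ω → A} {X' : Ω → B} {Y : Ω → C} {Y' : Ω → D}
    {Z : Ω → E} {Z' : Ω → F} (hXX' : Setoid.ker X = Setoid.ker X')
    (hYY' : Setoid.ker Y = Setoid.ker Y') (hZZ' : Setoid.ker Z = Setoid.ker Z')
    (hX : Measurable X := by fun_prop) (hX' : Measurable X' := by fun_prop)
    (hY : Measurable Y := by fun_prop) (hY' : Measurable Y' := by fun_prop)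
    (hZ : Measurable Z := by fun_prop) (hZ' : Measurable Z' := by fun_prop) :
    condMutualInfo μ X Y Z = condMutualInfo μ X' Y' Z' := by
  simp only [condMutualInfo, condEntropy]
  rw [entropy_eq_of_ker_eq hZ hZ' hZZ',
    entropy_eq_of_ker_eq (hX.prodMk hZ) (hX'.prodMk hZ')
      (by rw [Setoid.ker_prodMk, Setoid.ker_prodMk, hXX', hZZ']),
    entropy_eq_of_ker_eq (hY.prodMk hZ) (hY'.prodMk hZ')
      (by rw [Setoid.ker_prodMk, Setoid.ker_prodMk, hYY', hZZ']),
    entropy_eq_of_ker_eq ((hX.prodMk hY).prodMk hZ) ((hX'.prodMk hY').prodMk hZ')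
      (by simp only [Setoid.ker_prodMk, hXX', hYY', hZZ'])]

theorem condMutualInfo_comm_s3 {X : Ω → A} {Y : Ω → B} {Z : Ω → C}
    (hX : Measurable X := by fun_prop) (hY : Measurable Y := by fun_prop)
    (hZ : Measurable Z := by fun_prop) :
    condMutualInfo μ X Y Z = condMutualInfo μ Y X Z := by
  have hswap : entropy μ (fun ω => ((X ω, Y ω), Z ω)) = entropy μ (fun ω => ((Y ω, X ω), Z ω)) :=
    entropy_eq_of_ker_eq (by fun_prop) (by fun_prop)
      (by simp only [Setoid.ker_prodMk, inf_comm (Setoid.ker X)])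
  simp only [condMutualInfo, condEntropy, hswap]
  ring

theorem condMutualInfo_prod_left_s3 {U : Ω → A} {V : Ω → B} {W : Ω → C} {Z : Ω → D}
    (hU : Measurable U := by fun_prop) (hV : Measurable V := by fun_prop)
    (hW : Measurable W := by fun_prop) (hZ : Measurable Z := by fun_prop) :
    condMutualInfo μ (fun ω => (U ω, V ω)) W Z
      = condMutualInfo μ U W Z + condMutualInfo μ V W (fun ω => (U ω, Z ω)) := by
  have hUV : entropy μ (fun ω => ((U ω, V ω), Z ω)) = entropy μ (fun ω => (V ω, U ω, Z ω)) :=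
    entropy_eq_of_ker_eq (by fun_prop) (by fun_prop) (by simp only [Setoid.ker_prodMk]; ac_rfl)
  have hUW : entropy μ (fun ω => ((U ω, W ω), Z ω)) = entropy μ (fun ω => (W ω, U ω, Z ω)) :=
    entropy_eq_of_ker_eq (by fun_prop) (by fun_prop) (by simp only [Setoid.ker_prodMk]; ac_rfl)
  have hUVW : entropy μ (fun ω => (((U ω, V ω), W ω), Z ω))
      = entropy μ (fun ω => ((V ω, W ω), U ω, Z ω)) :=
    entropy_eq_of_ker_eq (by fun_prop) (by fun_prop) (by simp only [Setoid.ker_prodMk]; ac_rfl)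
  simp only [condMutualInfo, condEntropy, hUV, hUW, hUVW]
  ring

theorem condMutualInfo_prod_right_s3 {U : Ω → A} {V : Ω → B} {W : Ω → C} {Z : Ω → D}
    (hU : Measurable U := by fun_prop) (hV : Measurable V := by fun_prop)
    (hW : Measurable W := by fun_prop) (hZ : Measurable Z := by fun_prop) :
    condMutualInfo μ U (fun ω => (V ω, W ω)) Z
      = condMutualInfo μ U V Z + condMutualInfo μ U W (fun ω => (V ω, Z ω)) := by
  rw [condMutualInfo_comm_s3 hU (hV.prodMk hW) hZ, condMutualInfo_prod_left_s3 hV hW hU hZ,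
    condMutualInfo_comm_s3 hV hU hZ, condMutualInfo_comm_s3 hW hU (hV.prodMk hZ)]

end Entropy

section ConditionalIndependence

variable {Ω A B C : Type*} [MeasurableSpace Ω] {μ : Measure Ω} [IsFiniteMeasure μ]
  [MeasurableSpace A] [Fintype A] [MeasurableSingletonClass A]
  [MeasurableSpace B] [Fintype B] [MeasurableSingletonClass B]
  [MeasurableSpace C] [MeasurableSingletonClass C] {ζ : Ω → C}

theorem condExp_mul_measureReal_fiber (hζ : Measurable ζ) {E : Set Ω} (hE : MeasurableSet E)
    (ω : Ω) :
    (μ⟦E | MeasurableSpace.comap ζ inferInstance⟧) ω * μ.real (ζ ⁻¹' {ζ ω})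
      = μ.real (E ∩ ζ ⁻¹' {ζ ω}) := by
  set m := MeasurableSpace.comap ζ inferInstance
  have hfiber : MeasurableSet[m] (ζ ⁻¹' {ζ ω}) := ⟨_, measurableSet_singleton _, rfl⟩
  have hconst : Set.EqOn (μ⟦E | m⟧) (fun _ => (μ⟦E | m⟧) ω) (ζ ⁻¹' {ζ ω}) :=
    fun _ hω' => stronglyMeasurable_condExp.measurable.factorsThrough hω'
  calc (μ⟦E | m⟧) ω * μ.real (ζ ⁻¹' {ζ ω}) = ∫ ω' in ζ ⁻¹' {ζ ω}, (μ⟦E | m⟧) ω' ∂μ := by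
        rw [setIntegral_congr_fun (hζ.comap_le _ hfiber) hconst, setIntegral_const, smul_eq_mul,
          mul_comm]
    _ = ∫ ω' in ζ ⁻¹' {ζ ω}, E.indicator 1 ω' ∂μ :=
        setIntegral_condExp hζ.comap_le ((integrable_const 1).indicator hE) hfiber
    _ = μ.real (E ∩ ζ ⁻¹' {ζ ω}) := by
        rw [setIntegral_indicator hE, Set.inter_comm]
        simp

variable [StandardBorelSpace Ω]

theorem CondIndepSet.measureReal_inter_fiber_mul (hζ : Measurable ζ)
    {hm : MeasurableSpace.comap ζ inferInstance ≤ ‹MeasurableSpace Ω›} {E F : Set Ω}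
    (hE : MeasurableSet E) (hF : MeasurableSet F)
    (h : CondIndepSet (MeasurableSpace.comap ζ inferInstance) hm E F μ) (c : C) :
    μ.real (E ∩ F ∩ ζ ⁻¹' {c}) * μ.real (ζ ⁻¹' {c})
      = μ.real (E ∩ ζ ⁻¹' {c}) * μ.real (F ∩ ζ ⁻¹' {c}) := by
  rcases eq_or_ne (μ (ζ ⁻¹' {c})) 0 with hc | hc
  · simp [measureReal_def, hc, measure_inter_null_of_null_right]
  have : (ae (μ.restrict (ζ ⁻¹' {c}))).NeBot := ae_neBot.2 (by simpa using hc)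
  obtain ⟨ω, rfl, hω⟩ : ∃ ω, ζ ω = c ∧ (μ⟦E ∩ F | MeasurableSpace.comap ζ inferInstance⟧) ω
      = (μ⟦E | MeasurableSpace.comap ζ inferInstance⟧) ω
        * (μ⟦F | MeasurableSpace.comap ζ inferInstance⟧) ω := by
    have hae := (condIndepSet_iff _ _ _ _ hE hF μ).1 h
    refine Filter.Eventually.exists ?_ (f := ae (μ.restrict (ζ ⁻¹' {c})))
    filter_upwards [ae_restrict_mem (hζ (measurableSet_singleton c)), ae_restrict_of_ae hae]
      with ω hω hω'
    exact ⟨hω, hω'⟩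
  rw [← condExp_mul_measureReal_fiber hζ (hE.inter hF), ← condExp_mul_measureReal_fiber hζ hE,
    ← condExp_mul_measureReal_fiber hζ hF, hω]
  ring

theorem condMutualInfo_eq_zero_of_condIndepFun [Fintype C] {f : Ω → A} {g : Ω → B}
    {hm : MeasurableSpace.comap ζ inferInstance ≤ ‹MeasurableSpace Ω›}
    (h : CondIndepFun (MeasurableSpace.comap ζ inferInstance) hm f g μ)
    (hf : Measurable f := by fun_prop) (hg : Measurable g := by fun_prop)
    (hζ : Measurable ζ := by fun_prop) :
    condMutualInfo μ f g ζ = 0 := by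
  set W := fun ω => ((f ω, g ω), ζ ω)
  have hW : Measurable W := by fun_prop
  suffices entropy μ ((fun w => (w.1.1, w.2)) ∘ W) + entropy μ ((fun w => (w.1.2, w.2)) ∘ W)
      = entropy μ (id ∘ W) + entropy μ (Prod.snd ∘ W) by
    change entropy μ (fun ω => (f ω, ζ ω)) + entropy μ (fun ω => (g ω, ζ ω))
      = entropy μ (fun ω => ((f ω, g ω), ζ ω)) + entropy μ ζ at this
    simp only [condMutualInfo, condEntropy]
    linarith
  simp only [entropy_comp_eq_sum hW, ← sum_add_distrib]
  refine sum_congr rfl fun ⟨⟨a, b⟩, c⟩ _ => ?_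
  have hfac := CondIndepSet.measureReal_inter_fiber_mul hζ (hf (measurableSet_singleton a))
    (hg (measurableSet_singleton b)) ((condIndepFun_iff_condIndepSet_preimage hf hg).1 h _ _
      (measurableSet_singleton a) (measurableSet_singleton b)) c
  have hW_fiber : W ⁻¹' {((a, b), c)} = f ⁻¹' {a} ∩ g ⁻¹' {b} ∩ ζ ⁻¹' {c} := by
    ext; simp [W, and_assoc]
  have hf_fiber : (fun w => (w.1.1, w.2)) ∘ W ⁻¹' {(a, c)} = f ⁻¹' {a} ∩ ζ ⁻¹' {c} := by
    ext; simp [W]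
  have hg_fiber : (fun w => (w.1.2, w.2)) ∘ W ⁻¹' {(b, c)} = g ⁻¹' {b} ∩ ζ ⁻¹' {c} := by
    ext; simp [W]
  dsimp only [id]
  rw [Function.id_comp, hW_fiber, hf_fiber, hg_fiber, show Prod.snd ∘ W = ζ from rfl]
  have := mul_log_add_mul_log_eq_of_mul_eq
    (fun hp hc => hp (measureReal_mono_null Set.inter_subset_right hc)) hfac
  linarith

end ConditionalIndependence

theorem ker_tuple_eq_of_Icc_eq_insert {Ω : Type*} {S : ℕ → Type*} (X : ∀ i, Ω → S i)
    {a b c d j : ℕ} (h : Set.Icc a b = insert j (Set.Icc c d)) :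
    Setoid.ker (tuple X a b) = Setoid.ker (fun ω => (X j ω, tuple X c d ω)) :=
  Setoid.ext fun _ _ => by
    simp only [Setoid.ker_def, Prod.ext_iff, funext_iff, Subtype.forall, tuple, h,
      Set.forall_mem_insert]

theorem cutset_reduction_short_range_general
    {Ω : Type*} [MeasurableSpace Ω] [StandardBorelSpace Ω]
    {S T : ℕ → Type*}
    [∀ i, MeasurableSpace (S i)] [∀ i, Fintype (S i)]
    [∀ i, DiscreteMeasurableSpace (S i)]
    [∀ i, MeasurableSpace (T i)] [∀ i, Fintype (T i)]
    [∀ i, DiscreteMeasurableSpace (T i)]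
    (μ : Measure Ω) [IsProbabilityMeasure μ]
    (K k : ℕ) (hk1 : 1 ≤ k) (hk2 : k ≤ K - 1)
    (X : ∀ i, Ω → S i) (Y : ∀ i, Ω → T i)
    (hX : ∀ i, Measurable (X i)) (hY : ∀ i, Measurable (Y i))
    (hMarkov1 : CondIndepFun
      (MeasurableSpace.comap
        (fun ω => (Y (k + 1) ω, tuple X (k + 1) K ω)) inferInstance)
      (Measurable.comap_le (show Measurable (fun ω => (Y (k + 1) ω, tuple X (k + 1) K ω)) from
        (hY (k + 1)).prodMk (measurable_pi_lambda _ (fun l => hX l))))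
      (X k) (tuple Y (k + 2) (K + 1)) μ)
    (hMarkov2 : CondIndepFun
      (MeasurableSpace.comap
        (fun ω => (Y (K + 1) ω, tuple X k K ω)) inferInstance)
      (Measurable.comap_le (show Measurable (fun ω => (Y (K + 1) ω, tuple X k K ω)) from
        (hY (K + 1)).prodMk (measurable_pi_lambda _ (fun l => hX l))))
      (tuple X 0 (k - 1)) (tuple Y (k + 1) K) μ) :
    condMutualInfo μ (tuple X 0 k) (tuple Y (k + 1) (K + 1)) (tuple X (k + 1) K)
      = condMutualInfo μ (X k) (Y (k + 1)) (tuple X (k + 1) K)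
        + condMutualInfo μ (tuple X 0 (k - 1)) (Y (K + 1)) (tuple X k K) := by
  calc condMutualInfo μ (tuple X 0 k) (tuple Y (k + 1) (K + 1)) (tuple X (k + 1) K)
      = condMutualInfo μ (fun ω => (X k ω, tuple X 0 (k - 1) ω)) (tuple Y (k + 1) (K + 1))
          (tuple X (k + 1) K) :=
        condMutualInfo_congr (ker_tuple_eq_of_Icc_eq_insert X (by ext; simp; omega)) rfl rfl
    _ = condMutualInfo μ (X k) (tuple Y (k + 1) (K + 1)) (tuple X (k + 1) K)
        + condMutualInfo μ (tuple X 0 (k - 1)) (tuple Y (k + 1) (K + 1))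
          (fun ω => (X k ω, tuple X (k + 1) K ω)) := condMutualInfo_prod_left_s3
    _ = condMutualInfo μ (X k) (fun ω => (Y (k + 1) ω, tuple Y (k + 2) (K + 1) ω))
          (tuple X (k + 1) K)
        + condMutualInfo μ (tuple X 0 (k - 1)) (fun ω => (Y (K + 1) ω, tuple Y (k + 1) K ω))
          (tuple X k K) := by
      congr 1
      · exact condMutualInfo_congr rfl (ker_tuple_eq_of_Icc_eq_insert Y (by ext; simp; omega)) rfl
      · exact condMutualInfo_congr rfl (ker_tuple_eq_of_Icc_eq_insert Y (by ext; simp; omega))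
          (ker_tuple_eq_of_Icc_eq_insert X (by ext; simp; omega)).symm
    _ = _ := by
      rw [condMutualInfo_prod_right_s3 (U := X k),
        condMutualInfo_prod_right_s3 (U := tuple X 0 (k - 1)),
        condMutualInfo_eq_zero_of_condIndepFun hMarkov1,
        condMutualInfo_eq_zero_of_condIndepFun hMarkov2, add_zero, add_zero]

/-- Converse step of Theorem 2 (short-range relays): for `1 ≤ k ≤ K - 1`, if
`X_k – (Y_{k+1}, X_{k+1}^K) – Y_{k+2}^{K+1}` and `X_0^{k-1} – (Y_{K+1}, X_k^K) – Y_{k+1}^K`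
are Markov chains, then
`I(X_0^k ; Y_{k+1}^{K+1} | X_{k+1}^K) = I(X_k ; Y_{k+1} | X_{k+1}^K) + I(X_0^{k-1} ; Y_{K+1} | X_k^K)`. -/
theorem cutset_reduction_short_range
    {Ω : Type*} [MeasurableSpace Ω] [StandardBorelSpace Ω]
    {S T : ℕ → Type*}
    [∀ i, MeasurableSpace (S i)] [∀ i, Fintype (S i)] [∀ i, Nonempty (S i)]
    [∀ i, DiscreteMeasurableSpace (S i)]
    [∀ i, MeasurableSpace (T i)] [∀ i, Fintype (T i)] [∀ i, Nonempty (T i)]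
    [∀ i, DiscreteMeasurableSpace (T i)]
    (μ : Measure Ω) [IsProbabilityMeasure μ]
    (K k : ℕ) (hK : 2 ≤ K) (hk1 : 1 ≤ k) (hk2 : k ≤ K - 1)
    (X : ∀ i, Ω → S i) (Y : ∀ i, Ω → T i)
    (hX : ∀ i, Measurable (X i)) (hY : ∀ i, Measurable (Y i))
    (hMarkov1 : CondIndepFun
      (MeasurableSpace.comap
        (fun ω => (Y (k + 1) ω, tuple X (k + 1) K ω)) inferInstance)
      (Measurable.comap_le (show Measurable (fun ω => (Y (k + 1) ω, tuple X (k + 1) K ω)) from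
        (hY (k + 1)).prodMk (measurable_pi_lambda _ (fun l => hX l))))
      (X k) (tuple Y (k + 2) (K + 1)) μ)
    (hMarkov2 : CondIndepFun
      (MeasurableSpace.comap
        (fun ω => (Y (K + 1) ω, tuple X k K ω)) inferInstance)
      (Measurable.comap_le (show Measurable (fun ω => (Y (K + 1) ω, tuple X k K ω)) from
        (hY (K + 1)).prodMk (measurable_pi_lambda _ (fun l => hX l))))
      (tuple X 0 (k - 1)) (tuple Y (k + 1) K) μ) :
    condMutualInfo μ (tuple X 0 k) (tuple Y (k + 1) (K + 1)) (tuple X (k + 1) K)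
      = condMutualInfo μ (X k) (Y (k + 1)) (tuple X (k + 1) K)
        + condMutualInfo μ (tuple X 0 (k - 1)) (Y (K + 1)) (tuple X k K) :=
  cutset_reduction_short_range_general μ K k hk1 hk2 X Y hX hY hMarkov1 hMarkov2
end

section
/- Let X0, X1, X2, Y2, Y3 be random variables with values in finite spaces 𝒳0, 𝒳1, 𝒳2, 𝒴2, 𝒴3, and let f : 𝒳1 × 𝒳2 → 𝒴2 be a function such that Y2(ω) = f(X1(ω), X2(ω)) for all ω. Then I((X0, X1) ; (Y2, Y3) | X2) = I(X0 ; Y3 | (X1, X2, Y2)) + I(X1 ; Y3 | (X2, Y2)) + H(Y2 | X2). -/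
open MeasureTheory ProbabilityTheory

lemma entropy_comp_inj {Ω S T : Type*} [MeasurableSpace Ω]
    [MeasurableSpace S] [Fintype S] [DiscreteMeasurableSpace S]
    [MeasurableSpace T] [Fintype T] [DiscreteMeasurableSpace T]
    (μ : Measure Ω) (X : Ω → S) (hX : Measurable X)
    (g : S → T) (hg : Function.Injective g) :
    entropy μ (fun ω => g (X ω)) = entropy μ X := by
  classical
  have hgm : Measurable g := .of_discrete
  have hmap : μ.map (fun ω => g (X ω)) = (μ.map X).map g :=
    (Measure.map_map hgm hX).symm
  unfold entropy
  rw [hmap]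
  have key : ∀ y, ((μ.map X).map g) {y} = (μ.map X) (g ⁻¹' {y}) := fun y =>
    Measure.map_apply hgm (measurableSet_singleton y)
  calc ∑ y : T, Real.negMulLog (((μ.map X).map g) {y}).toReal
      = ∑ y ∈ Finset.univ.image g, Real.negMulLog (((μ.map X).map g) {y}).toReal := by
        refine (Finset.sum_subset (Finset.subset_univ _) ?_).symm
        intro y _ hy
        have h0 : g ⁻¹' {y} = ∅ := by
          ext x; simp only [Set.mem_preimage, Set.mem_singleton_iff, Set.mem_empty_iff_false,
            iff_false]
          intro h; exact hy (Finset.mem_image.2 ⟨x, Finset.mem_univ x, h⟩)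
        rw [key, h0]
        simp
    _ = ∑ x : S, Real.negMulLog (((μ.map X).map g) {g x}).toReal := by
        refine Finset.sum_image ?_
        intro a _ b _ h; exact hg h
    _ = ∑ x : S, Real.negMulLog ((μ.map X) {x}).toReal := by
        refine Finset.sum_congr rfl fun x _ => ?_
        have h1 : g ⁻¹' {g x} = {x} := by ext a; simp [hg.eq_iff]
        rw [key, h1]

lemma entropy_congr {Ω S T : Type*} [MeasurableSpace Ω]
    [MeasurableSpace S] [Fintype S] [DiscreteMeasurableSpace S]
    [MeasurableSpace T] [Fintype T] [DiscreteMeasurableSpace T]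
    (μ : Measure Ω) (A : Ω → S) (B : Ω → T) (hA : Measurable A) (hB : Measurable B)
    (q : S → T) (p : T → S) (hq : ∀ ω, B ω = q (A ω)) (hp : ∀ ω, A ω = p (B ω)) :
    entropy μ A = entropy μ B := by
  have h1 := entropy_comp_inj μ A hA (fun a => (a, q a))
    (fun a b h => congrArg Prod.fst h)
  have h2 := entropy_comp_inj μ B hB (fun b => (p b, b))
    (fun a b h => congrArg Prod.snd h)
  have e1 : (fun ω => ((fun a => (a, q a)) (A ω))) = fun ω => (A ω, B ω) := by
    funext ω; simp [hq ω]
  have e2 : (fun ω => ((fun b => (p b, b)) (B ω))) = fun ω => (A ω, B ω) := by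
    funext ω; simp [hp ω]
  rw [e1] at h1; rw [e2] at h2
  rw [← h1, h2]

/-- Converse step of Theorem 4 (semideterministic two-relay network): if
`Y2 = f(X1, X2)` pointwise, then
`I((X0, X1) ; (Y2, Y3) | X2)
  = I(X0 ; Y3 | (X1, X2, Y2)) + I(X1 ; Y3 | (X2, Y2)) + H(Y2 | X2)`. -/
theorem semideterministic_cutset_expansion
    {Ω S0 S1 S2 T2 T3 : Type*} [MeasurableSpace Ω]
    [MeasurableSpace S0] [Fintype S0] [Nonempty S0] [DiscreteMeasurableSpace S0]
    [MeasurableSpace S1] [Fintype S1] [Nonempty S1] [DiscreteMeasurableSpace S1]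
    [MeasurableSpace S2] [Fintype S2] [Nonempty S2] [DiscreteMeasurableSpace S2]
    [MeasurableSpace T2] [Fintype T2] [Nonempty T2] [DiscreteMeasurableSpace T2]
    [MeasurableSpace T3] [Fintype T3] [Nonempty T3] [DiscreteMeasurableSpace T3]
    (μ : Measure Ω) [IsProbabilityMeasure μ]
    (X0 : Ω → S0) (X1 : Ω → S1) (X2 : Ω → S2)
    (Y2 : Ω → T2) (Y3 : Ω → T3)
    (hX0 : Measurable X0) (hX1 : Measurable X1) (hX2 : Measurable X2)
    (hY2 : Measurable Y2) (hY3 : Measurable Y3)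
    (f : S1 × S2 → T2) (hf : ∀ ω, Y2 ω = f (X1 ω, X2 ω)) :
    condMutualInfo μ (fun ω => (X0 ω, X1 ω)) (fun ω => (Y2 ω, Y3 ω)) X2
      = condMutualInfo μ X0 Y3 (fun ω => (X1 ω, X2 ω, Y2 ω))
        + condMutualInfo μ X1 Y3 (fun ω => (X2 ω, Y2 ω))
        + condEntropy μ Y2 X2 := by
  have h1 : entropy μ (fun ω => ((X0 ω, X1 ω), X2 ω))
      = entropy μ (fun ω => (X0 ω, X1 ω, X2 ω)) :=
    entropy_congr μ _ _ ((hX0.prodMk hX1).prodMk hX2) (hX0.prodMk (hX1.prodMk hX2))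
      (fun s => (s.1.1, s.1.2, s.2)) (fun t => ((t.1, t.2.1), t.2.2))
      (fun ω => rfl) (fun ω => rfl)
  have h2 : entropy μ (fun ω => ((Y2 ω, Y3 ω), X2 ω))
      = entropy μ (fun ω => (X2 ω, Y2 ω, Y3 ω)) :=
    entropy_congr μ _ _ ((hY2.prodMk hY3).prodMk hX2) (hX2.prodMk (hY2.prodMk hY3))
      (fun s => (s.2, s.1.1, s.1.2)) (fun t => ((t.2.1, t.2.2), t.1))
      (fun ω => rfl) (fun ω => rfl)
  have h3 : entropy μ (fun ω => (((X0 ω, X1 ω), (Y2 ω, Y3 ω)), X2 ω))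
      = entropy μ (fun ω => (X0 ω, X1 ω, X2 ω, Y3 ω)) :=
    entropy_congr μ _ _
      (((hX0.prodMk hX1).prodMk (hY2.prodMk hY3)).prodMk hX2)
      (hX0.prodMk (hX1.prodMk (hX2.prodMk hY3)))
      (fun s => (s.1.1.1, s.1.1.2, s.2, s.1.2.2))
      (fun t => (((t.1, t.2.1), (f (t.2.1, t.2.2.1), t.2.2.2)), t.2.2.1))
      (fun ω => rfl) (fun ω => by simp [hf ω])
  have h5 : entropy μ (fun ω => (X0 ω, X1 ω, X2 ω, Y2 ω))
      = entropy μ (fun ω => (X0 ω, X1 ω, X2 ω)) :=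
    entropy_congr μ _ _
      (hX0.prodMk (hX1.prodMk (hX2.prodMk hY2)))
      (hX0.prodMk (hX1.prodMk hX2))
      (fun s => (s.1, s.2.1, s.2.2.1))
      (fun t => (t.1, t.2.1, t.2.2, f (t.2.1, t.2.2)))
      (fun ω => rfl) (fun ω => by simp [hf ω])
  have h6 : entropy μ (fun ω => (Y3 ω, X1 ω, X2 ω, Y2 ω))
      = entropy μ (fun ω => (X1 ω, X2 ω, Y3 ω)) :=
    entropy_congr μ _ _
      (hY3.prodMk (hX1.prodMk (hX2.prodMk hY2)))
      (hX1.prodMk (hX2.prodMk hY3))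
      (fun s => (s.2.1, s.2.2.1, s.1))
      (fun t => (t.2.2, t.1, t.2.1, f (t.1, t.2.1)))
      (fun ω => rfl) (fun ω => by simp [hf ω])
  have h7 : entropy μ (fun ω => ((X0 ω, Y3 ω), X1 ω, X2 ω, Y2 ω))
      = entropy μ (fun ω => (X0 ω, X1 ω, X2 ω, Y3 ω)) :=
    entropy_congr μ _ _
      ((hX0.prodMk hY3).prodMk (hX1.prodMk (hX2.prodMk hY2)))
      (hX0.prodMk (hX1.prodMk (hX2.prodMk hY3)))
      (fun s => (s.1.1, s.2.1, s.2.2.1, s.1.2))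
      (fun t => ((t.1, t.2.2.2), t.2.1, t.2.2.1, f (t.2.1, t.2.2.1)))
      (fun ω => rfl) (fun ω => by simp [hf ω])
  have h8 : entropy μ (fun ω => (X1 ω, X2 ω, Y2 ω))
      = entropy μ (fun ω => (X1 ω, X2 ω)) :=
    entropy_congr μ _ _
      (hX1.prodMk (hX2.prodMk hY2)) (hX1.prodMk hX2)
      (fun s => (s.1, s.2.1))
      (fun t => (t.1, t.2, f (t.1, t.2)))
      (fun ω => rfl) (fun ω => by simp [hf ω])
  have h10 : entropy μ (fun ω => (Y3 ω, X2 ω, Y2 ω))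
      = entropy μ (fun ω => (X2 ω, Y2 ω, Y3 ω)) :=
    entropy_congr μ _ _
      (hY3.prodMk (hX2.prodMk hY2)) (hX2.prodMk (hY2.prodMk hY3))
      (fun s => (s.2.1, s.2.2, s.1)) (fun t => (t.2.2, t.1, t.2.1))
      (fun ω => rfl) (fun ω => rfl)
  have h11 : entropy μ (fun ω => ((X1 ω, Y3 ω), X2 ω, Y2 ω))
      = entropy μ (fun ω => (X1 ω, X2 ω, Y3 ω)) :=
    entropy_congr μ _ _
      ((hX1.prodMk hY3).prodMk (hX2.prodMk hY2)) (hX1.prodMk (hX2.prodMk hY3))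
      (fun s => (s.1.1, s.2.1, s.1.2))
      (fun t => ((t.1, t.2.2), t.2.1, f (t.1, t.2.1)))
      (fun ω => rfl) (fun ω => by simp [hf ω])
  have h13 : entropy μ (fun ω => (Y2 ω, X2 ω))
      = entropy μ (fun ω => (X2 ω, Y2 ω)) :=
    entropy_congr μ _ _
      (hY2.prodMk hX2) (hX2.prodMk hY2)
      (fun s => (s.2, s.1)) (fun t => (t.2, t.1))
      (fun ω => rfl) (fun ω => rfl)
  simp only [condMutualInfo, condEntropy]
  rw [h1, h2, h3, h5, h6, h7, h8, h10, h11, h13]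
  ring
end

section
/- Let X0, X1, X2, Y2, Y3 be random variables with values in finite spaces 𝒳0, 𝒳1, 𝒳2, 𝒴2, 𝒴3, and let f : 𝒳1 × 𝒳2 → 𝒴2 be a function such that Y2(ω) = f(X1(ω), X2(ω)) for all ω. Then I((X0, X1) ; Y3 | (Y2, X2)) = I(X0 ; Y3 | (X1, X2)) + I(X1 ; Y3 | (Y2, X2)). -/
open MeasureTheory ProbabilityTheory

/-- Achievability step of Theorem 4 (semideterministic two-relay network): if
`Y2 = f(X1, X2)` pointwise, then
`I((X0, X1) ; Y3 | (Y2, X2)) = I(X0 ; Y3 | (X1, X2)) + I(X1 ; Y3 | (Y2, X2))`. -/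
theorem semideterministic_achievability_expansion
    {Ω S0 S1 S2 T2 T3 : Type*} [MeasurableSpace Ω]
    [MeasurableSpace S0] [Fintype S0] [Nonempty S0] [DiscreteMeasurableSpace S0]
    [MeasurableSpace S1] [Fintype S1] [Nonempty S1] [DiscreteMeasurableSpace S1]
    [MeasurableSpace S2] [Fintype S2] [Nonempty S2] [DiscreteMeasurableSpace S2]
    [MeasurableSpace T2] [Fintype T2] [Nonempty T2] [DiscreteMeasurableSpace T2]
    [MeasurableSpace T3] [Fintype T3] [Nonempty T3] [DiscreteMeasurableSpace T3]
    (μ : Measure Ω) [IsProbabilityMeasure μ]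
    (X0 : Ω → S0) (X1 : Ω → S1) (X2 : Ω → S2)
    (Y2 : Ω → T2) (Y3 : Ω → T3)
    (hX0 : Measurable X0) (hX1 : Measurable X1) (hX2 : Measurable X2)
    (hY2 : Measurable Y2) (hY3 : Measurable Y3)
    (f : S1 × S2 → T2) (hf : ∀ ω, Y2 ω = f (X1 ω, X2 ω)) :
    condMutualInfo μ (fun ω => (X0 ω, X1 ω)) Y3 (fun ω => (Y2 ω, X2 ω))
      = condMutualInfo μ X0 Y3 (fun ω => (X1 ω, X2 ω))
        + condMutualInfo μ X1 Y3 (fun ω => (Y2 ω, X2 ω)) := by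
  unfold condMutualInfo condEntropy
  -- Four entropy identities eliminating the redundant Y2
  have h1 : entropy μ (fun ω => ((X0 ω, X1 ω), (Y2 ω, X2 ω)))
      = entropy μ (fun ω => (X0 ω, (X1 ω, X2 ω))) := by
    have := entropy_comp_inj μ (fun ω => (X0 ω, (X1 ω, X2 ω)))
      (hX0.prodMk (hX1.prodMk hX2))
      (fun p => ((p.1, p.2.1), (f p.2, p.2.2)))
      (fun a b h => by simp_all [Prod.ext_iff])
    simpa [hf] using this
  have h2 : entropy μ (fun ω => (((X0 ω, X1 ω), Y3 ω), (Y2 ω, X2 ω)))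
      = entropy μ (fun ω => ((X0 ω, Y3 ω), (X1 ω, X2 ω))) := by
    have := entropy_comp_inj μ (fun ω => ((X0 ω, Y3 ω), (X1 ω, X2 ω)))
      ((hX0.prodMk hY3).prodMk (hX1.prodMk hX2))
      (fun p => (((p.1.1, p.2.1), p.1.2), (f p.2, p.2.2)))
      (fun a b h => by simp_all [Prod.ext_iff])
    simpa [hf] using this
  have h3 : entropy μ (fun ω => (X1 ω, (Y2 ω, X2 ω)))
      = entropy μ (fun ω => (X1 ω, X2 ω)) := by
    have := entropy_comp_inj μ (fun ω => (X1 ω, X2 ω))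
      (hX1.prodMk hX2)
      (fun p => (p.1, (f p, p.2)))
      (fun a b h => by simp_all [Prod.ext_iff])
    simpa [hf] using this
  have h4 : entropy μ (fun ω => ((X1 ω, Y3 ω), (Y2 ω, X2 ω)))
      = entropy μ (fun ω => (Y3 ω, (X1 ω, X2 ω))) := by
    have := entropy_comp_inj μ (fun ω => (Y3 ω, (X1 ω, X2 ω)))
      (hY3.prodMk (hX1.prodMk hX2))
      (fun p => ((p.2.1, p.1), (f p.2, p.2.2)))
      (fun a b h => by simp_all [Prod.ext_iff])
    simpa [hf] using this
  rw [h1, h2, h3, h4]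
  ring
end
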